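/- Let n ≥ 1 be an integer, let s ≥ 0, and let v₁,…,v_n be valuations given by integrable densities, each s-normalized. Let R be an axes-aligned rectangle with v_i(R) ≥ 2^{n+2} for every i ∈ {1,…,n}. Then there exists a pairwise s-separated family of axes-aligned rectangles A₁,…,A_n ⊆ R such that v_i(A_i) ≥ 1 for every i ∈ {1,…,n}. -/

import Mathlib

open MeasureTheory

noncomputable section

/-- A point of the plane. -/
abbrev Pt := ℝ × ℝ

/-- The ℓ∞ distance between two points of the plane. -/
def linfDist (p q : Pt) : ℝ := max |p.1 - q.1| |p.2 - q.2|

/-- Two pieces of land are `s`-separated: every pair of points, one from each piece,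
is at ℓ∞ distance at least `s`. -/
def SepSets (s : ℝ) (A B : Set Pt) : Prop := ∀ p ∈ A, ∀ q ∈ B, s ≤ linfDist p q

/-- An axes-aligned rectangle `[a,b] × [c,d]` with `a < b` and `c < d`. -/
structure Rect where
  a : ℝ
  b : ℝ
  c : ℝ
  d : ℝ
  hab : a < b
  hcd : c < d

/-- The set of points of a rectangle. -/
def Rect.set (R : Rect) : Set Pt := Set.Icc R.a R.b ×ˢ Set.Icc R.c R.d

/-- The length of the shorter side of a rectangle. -/
def Rect.short (R : Rect) : ℝ := min (R.b - R.a) (R.d - R.c)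

/-- The length of the longer side of a rectangle. -/
def Rect.long (R : Rect) : ℝ := max (R.b - R.a) (R.d - R.c)

/-- A rectangle is `r`-fat if its longer side is at most `r` times its shorter side. -/
def Rect.Fat (r : ℝ) (R : Rect) : Prop := R.long ≤ r * R.short

/-- The value of a piece `Z` under the density `f`. -/
def val (f : Pt → ℝ) (Z : Set Pt) : ℝ := ∫ p in Z, f p

/-- The 1-out-of-`k` maximin share of an agent with density `f` on land `L`
with separation parameter `s`: the supremum over families of `k` axes-aligned
rectangles inside `L`, pairwise intersecting in zero measure and pairwise
`s`-separated, of the minimum value of a rectangle. -/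
def MMS (f : Pt → ℝ) (L : Set Pt) (s : ℝ) (k : ℕ) : ℝ :=
  sSup {t : ℝ | ∃ P : Fin k → Rect,
    (∀ j, (P j).set ⊆ L) ∧
    (∀ i j, i ≠ j → volume ((P i).set ∩ (P j).set) = 0) ∧
    (∀ i j, i ≠ j → SepSets s ((P i).set) ((P j).set)) ∧
    (∀ j, t ≤ val f ((P j).set))}

/-- A valuation given by density `f` is `s`-normalized: there are finitely many
pairwise `s`-separated axes-aligned rectangles, each of value at most 1,
such that `f` vanishes outside their union. -/
def SNormalized (s : ℝ) (f : Pt → ℝ) : Prop :=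
  ∃ (N : ℕ) (Q : Fin N → Rect),
    (∀ i j, i ≠ j → SepSets s ((Q i).set) ((Q j).set)) ∧
    (∀ i, val f ((Q i).set) ≤ 1) ∧
    (∀ p, p ∉ ⋃ i, (Q i).set → f p = 0)

/-- The unit square `[0,1] × [0,1]`. -/
def unitSquare : Set Pt := Set.Icc (0 : ℝ) 1 ×ˢ Set.Icc (0 : ℝ) 1

/-- `Guillotine s a0 a1 b0 b1 P`: the family `P` of rectangles forms an
`s`-separated guillotine partition of `[a0,a1] × [b0,b1]`. -/
inductive Guillotine (s : ℝ) : ℝ → ℝ → ℝ → ℝ → List Rect → Prop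
  | single (a0 a1 b0 b1 : ℝ) (P : Rect)
      (h : P.set ⊆ Set.Icc a0 a1 ×ˢ Set.Icc b0 b1) :
      Guillotine s a0 a1 b0 b1 [P]
  | vert (a0 a1 b0 b1 a : ℝ) (h1 : a0 < a) (h2 : a < a1 - s)
      (P1 P2 : List Rect)
      (g1 : Guillotine s a0 a b0 b1 P1)
      (g2 : Guillotine s (a + s) a1 b0 b1 P2) :
      Guillotine s a0 a1 b0 b1 (P1 ++ P2)
  | horiz (a0 a1 b0 b1 b : ℝ) (h1 : b0 < b) (h2 : b < b1 - s)
      (P1 P2 : List Rect)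
      (g1 : Guillotine s a0 a1 b0 b P1)
      (g2 : Guillotine s a0 a1 (b + s) b1 P2) :
      Guillotine s a0 a1 b0 b1 (P1 ++ P2)

/-!
Regard each agent as the finite measure `νᵢ = fᵢ · volume`. With `k` agents, sweep a vertical
knife from the left; the part left of `zᵢ` is worth `2^(k+1)` to agent `i`, and `z = zⱼ₀` is the
leftmost such point, so everyone still owns `2^(k+1)` to the right of `z`. If some agent values
the part left of `z - s` at least 1, it takes that part and the others recurse to the right of
`z`. Otherwise, of the `k` buckets `[z + t s, z + (t+1) s)`, `1 ≤ t ≤ k`, one contains no `zᵢ`.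
The agents with `zᵢ < z + t s` each value the strip `[z - s, z + t s]` at more than
`2^(k+1) - 1`; they are served there, the others recurse to the right of `z + (t+1) s`.
In a strip of width `(t+1) s`, `s`-normalization bounds the value of every horizontal band of
height `s` by `t + 2`, so cutting the strip horizontally, each time for the first agent to reach
value 1, costs every remaining agent at most `t + 3`.
-/

open Set
open scoped Finset

namespace Rect

def leftOf (R : Rect) (x : ℝ) (h : R.a < x) : Rect :=
  ⟨R.a, min R.b x, R.c, R.d, lt_min R.hab h, R.hcd⟩

def rightOf (R : Rect) (x : ℝ) (h : x < R.b) : Rect :=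
  ⟨max R.a x, R.b, R.c, R.d, max_lt R.hab h, R.hcd⟩

def swap (R : Rect) : Rect := ⟨R.c, R.d, R.a, R.b, R.hcd, R.hab⟩

variable (R : Rect)

lemma leftOf_set (x : ℝ) (h : R.a < x) : (R.leftOf x h).set = R.set ∩ {p | p.1 ≤ x} := by
  ext p
  simp only [leftOf, Rect.set, mem_prod, mem_Icc, mem_inter_iff, mem_ofPred_eq, le_min_iff]
  tauto

lemma rightOf_set (x : ℝ) (h : x < R.b) : (R.rightOf x h).set = R.set ∩ {p | x ≤ p.1} := by
  ext p
  simp only [rightOf, Rect.set, mem_prod, mem_Icc, mem_inter_iff, mem_ofPred_eq, max_le_iff]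
  tauto

lemma swap_set : R.swap.set = Prod.swap ⁻¹' R.set := by
  ext p
  simp only [swap, Rect.set, mem_prod, mem_preimage, Prod.fst_swap, Prod.snd_swap]
  tauto

lemma measurableSet_set : MeasurableSet R.set := measurableSet_Icc.prod measurableSet_Icc

end Rect

lemma SepSets.mono {s : ℝ} {A B A' B' : Set Pt} (h : SepSets s A B) (hA : A' ⊆ A) (hB : B' ⊆ B) :
    SepSets s A' B' :=
  fun p hp q hq => h p (hA hp) q (hB hq)

lemma SepSets.symm {s : ℝ} {A B : Set Pt} (h : SepSets s A B) : SepSets s B A := by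
  intro p hp q hq
  rw [linfDist, abs_sub_comm p.1, abs_sub_comm p.2]
  exact h q hq p hp

lemma SepSets.preimage_swap {s : ℝ} {A B : Set Pt} (h : SepSets s A B) :
    SepSets s (Prod.swap ⁻¹' A) (Prod.swap ⁻¹' B) := by
  intro p hp q hq
  rw [linfDist, max_comm]
  exact h _ hp _ hq

lemma sepSets_of_nonpos {s : ℝ} (hs : s ≤ 0) (A B : Set Pt) : SepSets s A B :=
  fun _ _ _ _ => hs.trans (le_max_of_le_left (abs_nonneg _))

lemma sepSets_fst_le_fst_ge (s x : ℝ) : SepSets s {p : Pt | p.1 ≤ x} {p | x + s ≤ p.1} := by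
  intro p hp q hq
  rw [linfDist, abs_sub_comm]
  exact le_max_of_le_left ((le_abs_self _).trans' (by simp only [mem_ofPred_eq] at hp hq; linarith))

section Sweep

variable {μ : Measure Pt}

lemma measure_setOf_fst_eq (hμ : μ ≪ volume) (c : ℝ) : μ {p : Pt | p.1 = c} = 0 := by
  apply hμ
  have : {p : Pt | p.1 = c} = {c} ×ˢ univ := by ext p; simp
  rw [this, Measure.volume_eq_prod, Measure.prod_prod]
  simp

variable [IsFiniteMeasure μ]

lemma continuous_measureReal_inter_fst_le (hμ : μ ≪ volume) {Z : Set Pt} (hZ : MeasurableSet Z) :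
    Continuous fun x => μ.real (Z ∩ {p | p.1 ≤ x}) := by
  refine continuous_iff_continuousAt.2 fun x₀ => ?_
  refine (ENNReal.tendsto_toReal (measure_ne_top _ _)).comp ?_
  refine tendsto_measure_of_ae_tendsto_indicator_of_isFiniteMeasure _
    (hZ.inter (measurable_fst measurableSet_Iic))
    (fun x => hZ.inter (measurable_fst measurableSet_Iic)) ?_
  have : ∀ᵐ p ∂μ, p.1 ≠ x₀ := ae_iff.2 (by simpa using measure_setOf_fst_eq hμ x₀)
  filter_upwards [this] with p hp
  rcases hp.lt_or_gt with h | h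
  · filter_upwards [Ioi_mem_nhds h] with x hx
    simp [h.le, (show p.1 ≤ x from le_of_lt hx)]
  · filter_upwards [Iio_mem_nhds h] with x hx
    simp [not_le.2 h, not_le.2 (show x < p.1 from hx)]

lemma measureReal_le_inter_fst_le_add_inter_fst_ge (Z : Set Pt) (x : ℝ) :
    μ.real Z ≤ μ.real (Z ∩ {p | p.1 ≤ x}) + μ.real (Z ∩ {p | x ≤ p.1}) := by
  refine (measureReal_mono fun p hp => ?_).trans (measureReal_union_le _ _)
  rcases le_total p.1 x with h | h
  exacts [Or.inl ⟨hp, h⟩, Or.inr ⟨hp, h⟩]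

lemma measureReal_le_inter_fst_le_add_band_add_inter_fst_ge (Z : Set Pt) (x s : ℝ) :
    μ.real Z ≤ μ.real (Z ∩ {p | p.1 ≤ x}) + μ.real (Z ∩ {p | x < p.1 ∧ p.1 < x + s}) +
      μ.real (Z ∩ {p | x + s ≤ p.1}) := by
  set A := Z ∩ {p | p.1 ≤ x}
  set B := Z ∩ {p | x < p.1 ∧ p.1 < x + s}
  set C := Z ∩ {p | x + s ≤ p.1}
  have hcover : Z ⊆ A ∪ B ∪ C := by
    intro p hp
    by_cases h₁ : p.1 ≤ x
    · exact Or.inl (Or.inl ⟨hp, h₁⟩)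
    by_cases h₂ : p.1 < x + s
    · exact Or.inl (Or.inr ⟨hp, not_le.1 h₁, h₂⟩)
    · exact Or.inr ⟨hp, not_lt.1 h₂⟩
  calc μ.real Z ≤ μ.real (A ∪ B ∪ C) := measureReal_mono hcover
    _ ≤ μ.real (A ∪ B) + μ.real C := measureReal_union_le _ _
    _ ≤ μ.real A + μ.real B + μ.real C := by gcongr; exact measureReal_union_le _ _

lemma Rect.a_lt_of_measureReal_pos (hμ : μ ≪ volume) {R : Rect} {x : ℝ}
    (h : 0 < μ.real (R.set ∩ {p | p.1 ≤ x})) : R.a < x := by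
  by_contra! hx
  refine h.ne' ((measureReal_eq_zero_iff).2 (measure_mono_null ?_ (measure_setOf_fst_eq hμ R.a)))
  exact fun p ⟨hR, hp⟩ => le_antisymm (hp.trans hx) hR.1.1

lemma Rect.lt_b_of_measureReal_pos (hμ : μ ≪ volume) {R : Rect} {x : ℝ}
    (h : 0 < μ.real (R.set ∩ {p | x ≤ p.1})) : x < R.b := by
  by_contra! hx
  refine h.ne' ((measureReal_eq_zero_iff).2 (measure_mono_null ?_ (measure_setOf_fst_eq hμ R.b)))
  exact fun p ⟨hR, hp⟩ => le_antisymm hR.1.2 (hx.trans hp)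

lemma Rect.exists_measureReal_inter_fst_le_eq (hμ : μ ≪ volume) (R : Rect) {θ : ℝ}
    (h0 : 0 ≤ θ) (hθ : θ ≤ μ.real R.set) :
    ∃ x ∈ Icc R.a R.b, μ.real (R.set ∩ {p | p.1 ≤ x}) = θ := by
  have ha : μ.real (R.set ∩ {p | p.1 ≤ R.a}) = 0 := by
    by_contra h
    exact lt_irrefl _ (R.a_lt_of_measureReal_pos hμ (measureReal_nonneg.lt_of_ne' h))
  have hb : R.set ∩ {p | p.1 ≤ R.b} = R.set := inter_eq_left.2 fun p hp => hp.1.2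
  refine intermediate_value_Icc R.hab.le
    (continuous_measureReal_inter_fst_le hμ R.measurableSet_set).continuousOn ?_
  rw [ha, hb]
  exact ⟨h0, hθ⟩

end Sweep

lemma card_le_div_add_one_of_le_abs_sub {ι : Type*} {I : Finset ι} {x : ι → ℝ} {u₁ u₂ s : ℝ}
    (hs : 0 < s) (hu : u₁ ≤ u₂) (hx : ∀ i ∈ I, x i ∈ Icc u₁ u₂)
    (hsep : ∀ i ∈ I, ∀ j ∈ I, i ≠ j → s ≤ |x i - x j|) :
    (#I : ℝ) ≤ (u₂ - u₁) / s + 1 := by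
  have hdisj : (I : Set ι).PairwiseDisjoint fun i => Ico (x i) (x i + s) := by
    intro i hi j hj hij
    rw [Function.onFun, Ico_disjoint_Ico]
    rcases le_abs'.1 (hsep i hi j hj hij) with h | h
    · exact (min_le_left _ _).trans (by linarith [le_max_right (x i) (x j)])
    · exact (min_le_right _ _).trans (by linarith [le_max_left (x i) (x j)])
  have key : ∑ i ∈ I, volume (Ico (x i) (x i + s)) ≤ volume (Ico u₁ (u₂ + s)) := by
    rw [← measure_biUnion_finset hdisj fun _ _ => measurableSet_Ico]
    exact measure_mono (iUnion₂_subset fun i hi =>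
      Ico_subset_Ico (hx i hi).1 (by linarith [(hx i hi).2]))
  simp only [Real.volume_Ico, add_sub_cancel_left, Finset.sum_const, nsmul_eq_mul] at key
  rw [← ENNReal.ofReal_natCast, ← ENNReal.ofReal_mul (Nat.cast_nonneg _),
    ENNReal.ofReal_le_ofReal_iff (by linarith)] at key
  rw [div_add_one hs.ne', le_div_iff₀ hs]
  linarith

def BandBounded (s : ℝ) (μ : Measure Pt) : Prop :=
  ∀ u₁ u₂ w : ℝ, u₁ ≤ u₂ → μ.real (Icc u₁ u₂ ×ˢ Ioo w (w + s)) ≤ (u₂ - u₁) / s + 1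

lemma val_eq_measureReal {f : Pt → ℝ} (hf : Integrable f) (hpos : ∀ p, 0 ≤ f p) (Z : Set Pt) :
    val f Z = (volume.withDensity fun p => ENNReal.ofReal (f p)).real Z := by
  rw [val, Measure.real, withDensity_apply' _ Z,
    integral_eq_lintegral_of_nonneg_ae (ae_of_all _ hpos) hf.aestronglyMeasurable.restrict]

lemma SNormalized.bandBounded {s : ℝ} {f : Pt → ℝ} (hs : 0 < s) (hf : Integrable f)
    (hpos : ∀ p, 0 ≤ f p) (h : SNormalized s f) :
    BandBounded s (volume.withDensity fun p => ENNReal.ofReal (f p)) := by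
  classical
  obtain ⟨N, Q, hsep, hle, hvan⟩ := h
  intro u₁ u₂ w hu
  set μ := volume.withDensity fun p => ENNReal.ofReal (f p)
  have : IsFiniteMeasure μ := isFiniteMeasure_withDensity_ofReal hf.hasFiniteIntegral
  set E := Icc u₁ u₂ ×ˢ Ioo w (w + s)
  set I := Finset.univ.filter fun i => ((Q i).set ∩ E).Nonempty
  have hcover : E ⊆ (⋃ i ∈ I, (Q i).set) ∪ (⋃ i, (Q i).set)ᶜ := by
    intro p hp
    by_cases hQ : p ∈ ⋃ i, (Q i).set
    · obtain ⟨i, hi⟩ := mem_iUnion.1 hQ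
      exact Or.inl (mem_biUnion (Finset.mem_filter.2 ⟨Finset.mem_univ i, p, hi, hp⟩) hi)
    · exact Or.inr hQ
  have hnull : μ.real (⋃ i, (Q i).set)ᶜ = 0 := by
    rw [← val_eq_measureReal hf hpos]
    exact setIntegral_eq_zero_of_forall_eq_zero hvan
  have hcard : (#I : ℝ) ≤ (u₂ - u₁) / s + 1 := by
    choose! p hpQ hpE using fun i (hi : i ∈ I) => (Finset.mem_filter.1 hi).2
    refine card_le_div_add_one_of_le_abs_sub hs hu (x := fun i => (p i).1)
      (fun i hi => (hpE i hi).1) fun i hi j hj hij => ?_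
    have hy : |(p i).2 - (p j).2| < s := by
      obtain ⟨hi₁, hi₂⟩ := (hpE i hi).2
      obtain ⟨hj₁, hj₂⟩ := (hpE j hj).2
      rw [abs_sub_lt_iff]; constructor <;> linarith
    by_contra! hx
    exact (hsep i j hij _ (hpQ i hi) _ (hpQ j hj)).not_gt (max_lt hx hy)
  calc μ.real E ≤ μ.real (⋃ i ∈ I, (Q i).set) + μ.real (⋃ i, (Q i).set)ᶜ :=
        (measureReal_mono hcover).trans (measureReal_union_le _ _)
    _ ≤ ∑ i ∈ I, μ.real (Q i).set := by
        rw [hnull, add_zero]; exact measureReal_biUnion_finset_le _ _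
    _ ≤ ∑ i ∈ I, 1 := Finset.sum_le_sum fun i _ => (val_eq_measureReal hf hpos _).symm ▸ hle i
    _ ≤ (u₂ - u₁) / s + 1 := by simpa using hcard

lemma sub_one_mul_add_three_add_two_le_two_pow :
    ∀ k : ℕ, ((k : ℝ) - 1) * (k + 3) + 2 ≤ 2 ^ (k + 1)
  | 0 | 1 | 2 => by norm_num
  | k + 3 => by
    have ih := sub_one_mul_add_three_add_two_le_two_pow (k + 2)
    have hk : (k : ℝ) + 1 ≤ 2 ^ k := by exact_mod_cast Nat.lt_two_pow_self
    rw [show (2 : ℝ) ^ (k + 2 + 1) = 8 * 2 ^ k by ring] at ih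
    rw [show (2 : ℝ) ^ (k + 3 + 1) = 16 * 2 ^ k by ring]
    push_cast at ih ⊢
    nlinarith

lemma exists_empty_bucket {ι : Type*} (S : Finset ι) {w : ι → ℝ} {s : ℝ} (hs : 0 < s)
    (hw : ∀ j ∈ S, 0 ≤ w j) {j₀ : ι} (hj₀ : j₀ ∈ S) (h₀ : w j₀ < s) :
    ∃ t : ℕ, 1 ≤ t ∧ t ≤ #S ∧ ∀ j ∈ S, w j < t * s ∨ (t + 1) * s ≤ w j := by
  classical
  set φ : ι → ℕ := fun j => ⌊w j / s⌋₊
  have hφ₀ : φ j₀ = 0 := Nat.floor_eq_zero.2 ((div_lt_one hs).2 h₀)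
  -- `j₀` occupies bucket `0`, so fewer than `#S` of the buckets `1, …, #S` are occupied.
  have hcard : #((S.image φ).erase 0) < #(Finset.Icc 1 #S) := by
    rw [Finset.card_erase_of_mem (Finset.mem_image.2 ⟨j₀, hj₀, hφ₀⟩), Nat.card_Icc]
    have := Finset.card_image_le (s := S) (f := φ)
    have := Finset.card_pos.2 ⟨j₀, hj₀⟩
    omega
  obtain ⟨t, ht, htφ⟩ := Finset.exists_mem_notMem_of_card_lt_card hcard
  rw [Finset.mem_Icc] at ht
  refine ⟨t, ht.1, ht.2, fun j hj => ?_⟩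
  have hne : φ j ≠ t := fun h => htφ (Finset.mem_erase.2 ⟨by omega, Finset.mem_image.2 ⟨j, hj, h⟩⟩)
  rcases hne.lt_or_gt with h | h
  · left
    rw [← div_lt_iff₀ hs]
    exact (Nat.floor_lt (div_nonneg (hw j hj) hs.le)).1 h
  · right
    rw [← le_div_iff₀ hs]
    exact_mod_cast (Nat.le_floor_iff (div_nonneg (hw j hj) hs.le)).1 h

def Allocatable {ι : Type*} (s : ℝ) (ν : ι → Measure Pt) (S : Finset ι) (L : Set Pt) : Prop :=
  ∃ A : ι → Rect, (∀ i ∈ S, (A i).set ⊆ L) ∧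
    (∀ i ∈ S, ∀ j ∈ S, i ≠ j → SepSets s (A i).set (A j).set) ∧
    ∀ i ∈ S, 1 ≤ (ν i).real (A i).set

namespace Allocatable

variable {ι : Type*} {s : ℝ} {ν : ι → Measure Pt} {S T : Finset ι} {L : Set Pt}

lemma empty : Allocatable s ν ∅ L :=
  ⟨fun _ => ⟨0, 1, 0, 1, one_pos, one_pos⟩, by simp, by simp, by simp⟩

lemma of_forall_sepSets (R : Rect) (hsep : ∀ i ∈ S, ∀ j ∈ S, i ≠ j → SepSets s R.set R.set)
    (h : ∀ i ∈ S, 1 ≤ (ν i).real R.set) : Allocatable s ν S R.set :=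
  ⟨fun _ => R, fun _ _ => subset_rfl, hsep, h⟩

lemma singleton (i : ι) (R : Rect) (h : 1 ≤ (ν i).real R.set) : Allocatable s ν {i} R.set :=
  of_forall_sepSets R (by simp) (by simpa using h)

lemma mono {L' : Set Pt} (h : Allocatable s ν S L) (hL : L ⊆ L') : Allocatable s ν S L' :=
  let ⟨A, hsub, hsep, hval⟩ := h
  ⟨A, fun i hi => (hsub i hi).trans hL, hsep, hval⟩

lemma union [DecidableEq ι] {P Q : Set Pt} (hPQ : SepSets s P Q) (hS : Allocatable s ν S P)
    (hT : Allocatable s ν T Q) : Allocatable s ν (S ∪ T) (P ∪ Q) := by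
  obtain ⟨A, hAsub, hAsep, hAval⟩ := hS
  obtain ⟨B, hBsub, hBsep, hBval⟩ := hT
  have hT' : ∀ {i}, i ∈ S ∪ T → i ∉ S → i ∈ T := fun hi h => (Finset.mem_union.1 hi).resolve_left h
  refine ⟨fun i => if i ∈ S then A i else B i, fun i hi => ?_, fun i hi j hj hij => ?_,
    fun i hi => ?_⟩ <;> dsimp only
  · split_ifs with h
    exacts [(hAsub i h).trans subset_union_left, (hBsub i (hT' hi h)).trans subset_union_right]
  · split_ifs with h₁ h₂ h₂
    · exact hAsep i h₁ j h₂ hij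
    · exact hPQ.mono (hAsub i h₁) (hBsub j (hT' hj h₂))
    · exact (hPQ.mono (hAsub j h₂) (hBsub i (hT' hi h₁))).symm
    · exact hBsep i (hT' hi h₁) j (hT' hj h₂) hij
  · split_ifs with h
    exacts [hAval i h, hBval i (hT' hi h)]

lemma union_of_cut [DecidableEq ι] {Z : Set Pt} {x : ℝ}
    (hS : Allocatable s ν S (Z ∩ {p | p.1 ≤ x})) (hT : Allocatable s ν T (Z ∩ {p | x + s ≤ p.1})) :
    Allocatable s ν (S ∪ T) Z :=
  (union ((sepSets_fst_le_fst_ge s x).mono inter_subset_right inter_subset_right) hS hT).mono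
    (union_subset inter_subset_left inter_subset_left)

lemma of_map_swap {N : Rect} (h : Allocatable s (fun i => (ν i).map Prod.swap) S N.swap.set) :
    Allocatable s ν S N.set := by
  obtain ⟨A, hsub, hsep, hval⟩ := h
  refine ⟨fun i => (A i).swap, fun i hi => ?_, fun i hi j hj hij => ?_, fun i hi => ?_⟩
  · intro p hp
    rw [Rect.swap_set] at hp
    have := hsub i hi hp
    rwa [N.swap_set, mem_preimage, Prod.swap_swap] at this
  · simpa only [Rect.swap_set] using (hsep i hi j hj hij).preimage_swap
  · rw [Rect.swap_set, ← map_measureReal_apply measurable_swap (A i).measurableSet_set]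
    exact hval i hi

variable [∀ i, IsFiniteMeasure (ν i)]

lemma singleton_inter_fst_le (hν : ∀ i, ν i ≪ volume) {i : ι} {R : Rect} {x : ℝ}
    (h : 1 ≤ (ν i).real (R.set ∩ {p | p.1 ≤ x})) :
    Allocatable s ν {i} (R.set ∩ {p | p.1 ≤ x}) := by
  have hx := R.a_lt_of_measureReal_pos (hν i) (one_pos.trans_le h)
  rw [← R.leftOf_set x hx] at h ⊢
  exact singleton i _ h

lemma inter_fst_ge_of_rightOf (hν : ∀ i, ν i ≪ volume) {R : Rect} {x : ℝ}
    (hpos : ∀ i ∈ S, 0 < (ν i).real (R.set ∩ {p | x ≤ p.1}))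
    (h : ∀ hx : x < R.b, Allocatable s ν S (R.rightOf x hx).set) :
    Allocatable s ν S (R.set ∩ {p | x ≤ p.1}) := by
  rcases S.eq_empty_or_nonempty with rfl | ⟨i, hi⟩
  · exact empty
  have hx := R.lt_b_of_measureReal_pos (hν i) (hpos i hi)
  simpa only [R.rightOf_set x hx] using h hx

theorem of_forall_vertical_band_le (hν : ∀ i, ν i ≪ volume) (c : ℝ) (C : Finset ι) (N : Rect)
    (hband : ∀ j ∈ C, ∀ x, (ν j).real (N.set ∩ {p | x < p.1 ∧ p.1 < x + s}) ≤ c)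
    (hval : ∀ j ∈ C, (#C - 1 : ℝ) * (c + 1) + 1 ≤ (ν j).real N.set) :
    Allocatable s ν C N.set := by
  classical
  induction C using Finset.strongInduction generalizing N with
  | H C IH =>
  rcases le_or_gt #C 1 with hC | hC
  · refine .of_forall_sepSets N
      (fun i hi j hj hij => absurd (Finset.card_le_one.1 hC i hi j hj) hij) fun j hj => ?_
    simpa [le_antisymm hC (Finset.card_pos.2 ⟨j, hj⟩)] using hval j hj
  obtain ⟨j₁, hj₁⟩ := Finset.card_pos.1 (zero_lt_one.trans hC)
  have hc : 0 ≤ c := measureReal_nonneg.trans (hband j₁ hj₁ 0)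
  have hC' : (1 : ℝ) ≤ #C - 1 := by
    rw [le_sub_iff_add_le]; exact_mod_cast hC
  have hone : ∀ j ∈ C, 1 ≤ (ν j).real N.set := fun j hj => by nlinarith [hval j hj]
  choose! y _ hy using fun j hj =>
    N.exists_measureReal_inter_fst_le_eq (hν j) zero_le_one (hone j hj)
  obtain ⟨j₀, hj₀, hmin⟩ := C.exists_min_image y ⟨j₁, hj₁⟩
  have hT : (1 : ℝ) ≤ #(C.erase j₀) := by
    rw [Finset.card_erase_of_mem hj₀]; exact_mod_cast Nat.le_sub_one_of_lt hC
  have hrest : ∀ j ∈ C.erase j₀, (#(C.erase j₀) - 1 : ℝ) * (c + 1) + 1 ≤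
      (ν j).real (N.set ∩ {p | y j₀ + s ≤ p.1}) := by
    intro j hj
    have hjC := Finset.mem_of_mem_erase hj
    have hleft : (ν j).real (N.set ∩ {p | p.1 ≤ y j₀}) ≤ 1 :=
      (hy j hjC).le.trans' (measureReal_mono (inter_subset_inter_right _
        fun p (hp : p.1 ≤ y j₀) => hp.trans (hmin j hjC)))
    rw [Finset.card_erase_of_mem hj₀, Nat.cast_sub (hC.le.trans' (by norm_num)), Nat.cast_one]
    linarith [measureReal_le_inter_fst_le_add_band_add_inter_fst_ge (μ := ν j) N.set (y j₀) s,
      hband j hjC (y j₀), hval j hjC]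
  have hallocT : Allocatable s ν (C.erase j₀) (N.set ∩ {p | y j₀ + s ≤ p.1}) := by
    refine .inter_fst_ge_of_rightOf hν (fun j hj => by nlinarith [hrest j hj])
      fun hx => IH _ (Finset.erase_ssubset hj₀) _ (fun j hj x => ?_) fun j hj => ?_
    · refine (measureReal_mono (inter_subset_inter_left _ ?_)).trans
        (hband j (Finset.mem_of_mem_erase hj) x)
      exact (N.rightOf_set _ hx).trans_subset inter_subset_left
    · rw [N.rightOf_set]
      exact hrest j hj
  rw [← Finset.insert_erase hj₀, Finset.insert_eq]
  exact .union_of_cut (.singleton_inter_fst_le hν (hy j₀ hj₀).ge) hallocT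

theorem of_forall_horizontal_band_le (hν : ∀ i, ν i ≪ volume) (c : ℝ) (C : Finset ι) (N : Rect)
    (hband : ∀ j ∈ C, ∀ y, (ν j).real (N.set ∩ {p | y < p.2 ∧ p.2 < y + s}) ≤ c)
    (hval : ∀ j ∈ C, (#C - 1 : ℝ) * (c + 1) + 1 ≤ (ν j).real N.set) :
    Allocatable s ν C N.set := by
  have hswap : ∀ i, (ν i).map Prod.swap ≪ volume := fun i => by
    simpa [Measure.volume_eq_prod, Measure.prod_swap] using (hν i).map measurable_swap
  refine .of_map_swap
    (of_forall_vertical_band_le hswap c C N.swap (fun j hj y => ?_) fun j hj => ?_)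
  · have hm : MeasurableSet (N.swap.set ∩ {p : Pt | y < p.1 ∧ p.1 < y + s}) :=
      N.swap.measurableSet_set.inter (measurable_fst measurableSet_Ioo)
    rw [map_measureReal_apply measurable_swap hm]
    simpa [Rect.swap_set, preimage_preimage] using hband j hj y
  · rw [map_measureReal_apply measurable_swap N.swap.measurableSet_set, Rect.swap_set]
    simpa [preimage_preimage] using hval j hj

theorem of_width_le (hν : ∀ i, ν i ≪ volume) (hband : ∀ i, BandBounded s (ν i))
    (C : Finset ι) (N : Rect)
    (hval : ∀ j ∈ C, (#C - 1 : ℝ) * ((N.b - N.a) / s + 2) + 1 ≤ (ν j).real N.set) :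
    Allocatable s ν C N.set := by
  refine .of_forall_horizontal_band_le hν ((N.b - N.a) / s + 1) C N
    (fun j _ y => (measureReal_mono (s₂ := Icc N.a N.b ×ˢ Ioo y (y + s))
      fun p hp => ⟨hp.1.1, hp.2⟩).trans (hband j _ _ y N.hab.le)) fun j hj => ?_
  rw [add_assoc, one_add_one_eq_two]
  exact hval j hj

theorem of_strip (hs : 0 < s) (hν : ∀ i, ν i ≪ volume) (hband : ∀ i, BandBounded s (ν i))
    {C : Finset ι} {R : Rect} {x₁ x₂ : ℝ} (h₁ : x₁ < R.b) (h₂ : R.a < x₂) (h₁₂ : x₁ < x₂)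
    (hval : ∀ j ∈ C, (#C - 1 : ℝ) * ((x₂ - x₁) / s + 2) + 1 + (ν j).real (R.set ∩ {p | p.1 ≤ x₁})
      ≤ (ν j).real (R.set ∩ {p | p.1 ≤ x₂})) :
    Allocatable s ν C (R.set ∩ {p | p.1 ≤ x₂}) := by
  have h₂' : (R.rightOf x₁ h₁).a < x₂ := max_lt h₂ h₁₂
  set N := (R.rightOf x₁ h₁).leftOf x₂ h₂'
  have hN : N.set = R.set ∩ {p | p.1 ≤ x₂} ∩ {p | x₁ ≤ p.1} := by
    rw [Rect.leftOf_set, Rect.rightOf_set, inter_right_comm]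
  refine (of_width_le hν hband C N fun j hj => ?_).mono (hN.trans_subset inter_subset_left)
  have hwidth : (N.b - N.a) / s ≤ (x₂ - x₁) / s :=
    div_le_div_of_nonneg_right (sub_le_sub (min_le_right _ _) (le_max_right _ _)) hs.le
  have hcut := measureReal_le_inter_fst_le_add_inter_fst_ge (μ := ν j) (R.set ∩ {p | p.1 ≤ x₂}) x₁
  rw [← hN] at hcut
  have hleft : (ν j).real (R.set ∩ {p | p.1 ≤ x₂} ∩ {p | p.1 ≤ x₁}) ≤
      (ν j).real (R.set ∩ {p | p.1 ≤ x₁}) :=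
    measureReal_mono (inter_subset_inter_left _ inter_subset_left)
  have hC : (0 : ℝ) ≤ #C - 1 := sub_nonneg.2 (by exact_mod_cast Finset.card_pos.2 ⟨j, hj⟩)
  nlinarith [hval j hj]

theorem of_crossing_points (hs : 0 < s) (hν : ∀ i, ν i ≪ volume)
    (hband : ∀ i, BandBounded s (ν i)) {S : Finset ι} {R : Rect} {B : ℝ}
    (hB : ((#S : ℝ) - 1) * (#S + 3) + 2 ≤ B) {z : ι → ℝ} {j₀ : ι} (hj₀ : j₀ ∈ S)
    (hzR : z j₀ ∈ Icc R.a R.b) (hmin : ∀ j ∈ S, z j₀ ≤ z j)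
    (hz : ∀ j ∈ S, B ≤ (ν j).real (R.set ∩ {p | p.1 ≤ z j}))
    (hA : ∀ i ∈ S, (ν i).real (R.set ∩ {p | p.1 ≤ z j₀ - s}) < 1)
    (hrec : ∀ T ⊂ S, ∀ x, (∀ j ∈ T, x ≤ z j) → Allocatable s ν T (R.set ∩ {p | x ≤ p.1})) :
    Allocatable s ν S R.set := by
  classical
  obtain ⟨t, ht₁, htS, hgap⟩ := exists_empty_bucket S (w := fun j => z j - z j₀) hs
    (fun j hj => sub_nonneg.2 (hmin j hj)) hj₀ (by simpa using hs)
  have hts : 0 < t * s := mul_pos (by exact_mod_cast ht₁) hs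
  rw [← Finset.filter_union_filter_not_eq (fun j => z j - z j₀ < t * s) S]
  refine .union_of_cut (x := z j₀ + t * s) (.of_strip hs hν hband (x₁ := z j₀ - s)
    (by linarith [hzR.2]) (by linarith [hzR.1]) (by linarith) fun j hj => ?_)
    (hrec _ (Finset.filter_ssubset.2 ⟨j₀, hj₀, by simpa using hts⟩) _ fun j hj => ?_)
  · obtain ⟨hjS, hjC⟩ := Finset.mem_filter.1 hj
    have hB₂ : B ≤ (ν j).real (R.set ∩ {p | p.1 ≤ z j₀ + t * s}) := (hz j hjS).trans
      (measureReal_mono (inter_subset_inter_right _ fun p (hp : p.1 ≤ z j) =>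
        show p.1 ≤ z j₀ + t * s by linarith))
    have hwidth : (z j₀ + t * s - (z j₀ - s)) / s = t + 1 := by field_simp; ring
    have hcard : (#(S.filter fun j => z j - z j₀ < t * s) : ℝ) ≤ #S := by
      exact_mod_cast Finset.card_filter_le _ _
    have hcard₁ : (1 : ℝ) ≤ #(S.filter fun j => z j - z j₀ < t * s) := by
      exact_mod_cast Finset.card_pos.2 ⟨j, hj⟩
    have htS' : (t : ℝ) ≤ #S := by exact_mod_cast htS
    rw [hwidth]
    nlinarith [hA j hjS]
  · have := (hgap j (Finset.mem_filter.1 hj).1).resolve_left (Finset.mem_filter.1 hj).2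
    linarith

theorem of_two_pow_card_add_two_le (hs : 0 < s) (hν : ∀ i, ν i ≪ volume)
    (hband : ∀ i, BandBounded s (ν i)) (S : Finset ι) (R : Rect) (hR : ∀ i ∈ S, 2 ^ (#S + 2) ≤ (ν i).real R.set) :
    Allocatable s ν S R.set := by
  classical
  induction S using Finset.strongInduction generalizing R with
  | H S IH =>
  rcases S.eq_empty_or_nonempty with rfl | hS
  · exact .empty
  set B : ℝ := 2 ^ (#S + 1) with hBdef
  have hB : 0 < B := by positivity
  have hR' : ∀ j ∈ S, 2 * B ≤ (ν j).real R.set := fun j hj => by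
    rw [hBdef, ← pow_succ']; exact hR j hj
  choose! z hzR hz using fun j hj =>
    R.exists_measureReal_inter_fst_le_eq (hν j) hB.le (by linarith [hR' j hj])
  obtain ⟨j₀, hj₀, hmin⟩ := S.exists_min_image z hS
  have hright : ∀ j ∈ S, ∀ x ≤ z j, B ≤ (ν j).real (R.set ∩ {p | x ≤ p.1}) := fun j hj x hx => by
    have : (ν j).real (R.set ∩ {p | p.1 ≤ x}) ≤ B := (hz j hj).le.trans'
      (measureReal_mono (inter_subset_inter_right _ fun p hp => hp.trans hx))
    linarith [measureReal_le_inter_fst_le_add_inter_fst_ge (μ := ν j) R.set x, hR' j hj]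
  have hrec : ∀ T ⊂ S, ∀ x, (∀ j ∈ T, x ≤ z j) → Allocatable s ν T (R.set ∩ {p | x ≤ p.1}) := by
    intro T hT x hx
    refine .inter_fst_ge_of_rightOf hν
      (fun j hj => hB.trans_le (hright j (hT.subset hj) x (hx j hj)))
      fun hxb => IH T hT _ fun j hj => ?_
    rw [R.rightOf_set]
    refine le_trans (pow_le_pow_right₀ one_le_two ?_) (hright j (hT.subset hj) x (hx j hj))
    have := Finset.card_lt_card hT
    omega
  by_cases hA : ∃ i ∈ S, 1 ≤ (ν i).real (R.set ∩ {p | p.1 ≤ z j₀ - s})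
  · obtain ⟨i, hi, hone⟩ := hA
    rw [← Finset.insert_erase hi, Finset.insert_eq]
    exact .union_of_cut (.singleton_inter_fst_le hν hone) (hrec _ (Finset.erase_ssubset hi) _
      fun j hj => by simpa using hmin j (Finset.mem_of_mem_erase hj))
  push Not at hA
  exact .of_crossing_points hs hν hband (sub_one_mul_add_three_add_two_le_two_pow #S) hj₀
    (hzR j₀ hj₀) hmin (fun j hj => (hz j hj).ge) hA hrec

end Allocatable

theorem stmt13_general (n : ℕ) (s : ℝ)
    (f : Fin n → Pt → ℝ) (hint : ∀ i, Integrable (f i))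
    (hpos : ∀ i p, 0 ≤ f i p) (hnorm : ∀ i, SNormalized s (f i))
    (R : Rect) (hval : ∀ i, (2 : ℝ) ^ (n + 2) ≤ val (f i) R.set) :
    ∃ A : Fin n → Rect,
      (∀ i, (A i).set ⊆ R.set) ∧
      (∀ i j, i ≠ j → SepSets s ((A i).set) ((A j).set)) ∧
      (∀ i, 1 ≤ val (f i) ((A i).set)) := by
  set ν : Fin n → Measure Pt := fun i => volume.withDensity fun p => ENNReal.ofReal (f i p)
  have : ∀ i, IsFiniteMeasure (ν i) := fun i =>
    isFiniteMeasure_withDensity_ofReal (hint i).hasFiniteIntegral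
  have hval_eq : ∀ i Z, val (f i) Z = (ν i).real Z := fun i => val_eq_measureReal (hint i) (hpos i)
  have hR : ∀ i ∈ Finset.univ, 2 ^ (#(Finset.univ : Finset (Fin n)) + 2) ≤ (ν i).real R.set := by
    simpa [← hval_eq] using fun i => hval i
  suffices h : Allocatable s ν Finset.univ R.set by
    obtain ⟨A, hsub, hsep, hone⟩ := h
    exact ⟨A, fun i => hsub i (Finset.mem_univ i), fun i j => hsep i (by simp) j (by simp),
      fun i => (hval_eq i _).symm ▸ hone i (Finset.mem_univ i)⟩
  rcases le_or_gt s 0 with hs | hs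
  · exact .of_forall_sepSets R (fun _ _ _ _ _ => sepSets_of_nonpos hs _ _)
      fun i hi => (one_le_pow₀ one_le_two).trans (hR i hi)
  · exact .of_two_pow_card_add_two_le hs (fun i => withDensity_absolutelyContinuous _ _)
      (fun i => (hnorm i).bandBounded hs (hint i) (hpos i)) _ R hR

/-- `n` `s`-normalized agents valuing a rectangle at least `2^(n+2)` each can
each get an `s`-separated sub-rectangle of value at least 1. -/
theorem stmt13 (n : ℕ) (hn : 1 ≤ n) (s : ℝ) (hs : 0 ≤ s)
    (f : Fin n → Pt → ℝ) (hint : ∀ i, Integrable (f i))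
    (hpos : ∀ i p, 0 ≤ f i p) (hnorm : ∀ i, SNormalized s (f i))
    (R : Rect) (hval : ∀ i, (2 : ℝ) ^ (n + 2) ≤ val (f i) R.set) :
    ∃ A : Fin n → Rect,
      (∀ i, (A i).set ⊆ R.set) ∧
      (∀ i j, i ≠ j → SepSets s ((A i).set) ((A j).set)) ∧
      (∀ i, 1 ≤ val (f i) ((A i).set)) :=
  stmt13_general n s f hint hpos hnorm R hval
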